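/- A linear map Φ : M_m(ℂ) → M_n(ℂ) is decomposable if and only if Tr(ρ·C_Φ) ≥ 0 for every PPT matrix ρ ∈ M_m(ℂ)⊗M_n(ℂ). -/

import Mathlib

open Matrix
open scoped ComplexOrder

noncomputable section

/-- A map between complex matrix algebras is positive if it maps positive semidefinite
matrices to positive semidefinite matrices. -/
def IsPosMap {m n : ℕ} (Φ : Matrix (Fin m) (Fin m) ℂ → Matrix (Fin n) (Fin n) ℂ) : Prop :=
  ∀ X, X.PosSemidef → (Φ X).PosSemidef

/-- Blockwise application of a map `Φ : M_m → M_n` to a matrix in `M_k(M_m)`: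
`Φ_k (X_{ij}) = (Φ(X_{ij}))`. -/
def blockApply {m n : ℕ} (k : ℕ)
    (Φ : Matrix (Fin m) (Fin m) ℂ → Matrix (Fin n) (Fin n) ℂ)
    (X : Matrix (Fin k × Fin m) (Fin k × Fin m) ℂ) :
    Matrix (Fin k × Fin n) (Fin k × Fin n) ℂ :=
  Matrix.of fun p q => Φ (Matrix.of fun i j => X (p.1, i) (q.1, j)) p.2 q.2

/-- `Φ` is completely positive if it is `k`-positive for every `k`, i.e. the blockwise
application of `Φ` to `M_k(M_m)` is a positive map for every `k`. -/
def IsCompletelyPositive {m n : ℕ}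
    (Φ : Matrix (Fin m) (Fin m) ℂ → Matrix (Fin n) (Fin n) ℂ) : Prop :=
  ∀ k : ℕ, ∀ X : Matrix (Fin k × Fin m) (Fin k × Fin m) ℂ,
    X.PosSemidef → (blockApply k Φ X).PosSemidef

/-- `Φ` is decomposable if it is the sum of a completely positive linear map and a
completely copositive linear map. -/
def IsDecomposable {m n : ℕ}
    (Φ : Matrix (Fin m) (Fin m) ℂ → Matrix (Fin n) (Fin n) ℂ) : Prop :=
  ∃ Φ₁ Φ₂ : Matrix (Fin m) (Fin m) ℂ → Matrix (Fin n) (Fin n) ℂ,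
    IsLinearMap ℂ Φ₁ ∧ IsLinearMap ℂ Φ₂ ∧
    IsCompletelyPositive Φ₁ ∧ IsCompletelyPositive (fun X => (Φ₂ X)ᵀ) ∧
    ∀ X, Φ X = Φ₁ X + Φ₂ X

/-- The Choi matrix of `Φ`: `C_Φ = (Φ(E_{ij}))_{i,j}` as an element of `M_m ⊗ M_n`. -/
def choiMatrix {m n : ℕ} (Φ : Matrix (Fin m) (Fin m) ℂ → Matrix (Fin n) (Fin n) ℂ) :
    Matrix (Fin m × Fin n) (Fin m × Fin n) ℂ :=
  Matrix.of fun p q => Φ (Matrix.single p.1 q.1 1) p.2 q.2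

/-- The simple tensor `ξ ⊗ η` of two vectors. -/
def tensorVec {m n : ℕ} (ξ : Fin m → ℂ) (η : Fin n → ℂ) : Fin m × Fin n → ℂ :=
  fun p => ξ p.1 * η p.2

/-- The partial transposition `(id ⊗ transpose)` on `M_m ⊗ M_n`. -/
def partialTranspose {m n : ℕ} (ρ : Matrix (Fin m × Fin n) (Fin m × Fin n) ℂ) :
    Matrix (Fin m × Fin n) (Fin m × Fin n) ℂ :=
  Matrix.of fun p q => ρ (p.1, q.2) (q.1, p.2)

/-- The Choi-like map `Φ_A` associated to a matrix `A` of coefficients: the `i`-th diagonal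
entry of `Φ_A(X)` is `∑ k, A i k * x_{kk}` and the off-diagonal entries are `-x_{ij}`. -/
def PhiMap {n : ℕ} (A : Matrix (Fin n) (Fin n) ℝ) (X : Matrix (Fin n) (Fin n) ℂ) :
    Matrix (Fin n) (Fin n) ℂ :=
  Matrix.of fun i j => if i = j then ∑ k, (A i k : ℂ) * X k k else -X i j

/-- The generalized Choi map `Φ_{[a,b,c]}` of Cho, Kye and Lee. -/
def genChoiMap (a b c : ℝ) : Matrix (Fin 3) (Fin 3) ℂ → Matrix (Fin 3) (Fin 3) ℂ :=
  PhiMap !![a, b, c; c, a, b; b, c, a]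

/-- Kye's map `Φ_{[a; c₁, c₂, c₃]}`. -/
def kyeMap (a c₁ c₂ c₃ : ℝ) : Matrix (Fin 3) (Fin 3) ℂ → Matrix (Fin 3) (Fin 3) ℂ :=
  PhiMap !![a, 0, c₁; c₂, a, 0; 0, c₃, a]

/-- The diagonal map `Δ_A(X) = diag(∑_j (a_{ij} + δ_{ij}) x_{jj})_i`. -/
def DeltaMap {n : ℕ} (A : Matrix (Fin n) (Fin n) ℝ) (X : Matrix (Fin n) (Fin n) ℂ) :
    Matrix (Fin n) (Fin n) ℂ :=
  Matrix.diagonal (fun i => ∑ j, ((A i j : ℂ) + if i = j then 1 else 0) * X j j)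

/-- The map `Φ_A(X) = Δ_A(X) - X`. -/
def PhiDelta {n : ℕ} (A : Matrix (Fin n) (Fin n) ℝ) (X : Matrix (Fin n) (Fin n) ℂ) :
    Matrix (Fin n) (Fin n) ℂ :=
  DeltaMap A X - X


/-!
Choi matrices of completely positive maps are exactly the positive semidefinite matrices, and those
of completely copositive maps are their partial transposes `Q^Γ`. So `Φ` is decomposable iff `C_Φ`
lies in the cone `K = {P + Q^Γ | P, Q ⪰ 0}`, and since `Tr(ρ (P + Q^Γ)) = Tr(ρ P) + Tr(ρ^Γ Q)`, the
PPT matrices form the dual cone of `K`. The cone `K` is closed (the trace of `P + Q^Γ` bounds `P`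
and `Q`), so by Hahn–Banach it is its own double dual. The Hermiticity of `C_Φ` needed for this is
automatic: the imaginary part of `C_Φ` pairs to zero with every PPT matrix, so it and its negative
lie in `K`, which is pointed.
-/

open ComplexStarModule
open scoped Kronecker

section GeneralMatrix

variable {d : Type*} [Fintype d]

lemma Matrix.trace_mul_vecMulVec_star (A : Matrix d d ℂ) (v : d → ℂ) :
    (A * vecMulVec v (star v)).trace = star v ⬝ᵥ A *ᵥ v := by
  rw [mul_vecMulVec, trace_vecMulVec, dotProduct_comm]

lemma Matrix.PosSemidef.trace_mul_nonneg {A B : Matrix d d ℂ} (hA : A.PosSemidef)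
    (hB : B.PosSemidef) : 0 ≤ (A * B).trace := by
  obtain ⟨r, v, rfl⟩ := posSemidef_iff_eq_sum_vecMulVec.1 hB
  rw [Matrix.mul_sum, trace_sum]
  exact Finset.sum_nonneg fun t _ => by
    rw [trace_mul_vecMulVec_star]
    exact hA.dotProduct_mulVec_nonneg _

lemma Matrix.IsHermitian.trace_mul_conjTranspose {ρ : Matrix d d ℂ} (hρ : ρ.IsHermitian)
    (X : Matrix d d ℂ) : (ρ * Xᴴ).trace = star (ρ * X).trace := by
  rw [← trace_conjTranspose, conjTranspose_mul, hρ.eq, trace_mul_comm]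

lemma Matrix.IsHermitian.trace_mul_realPart {ρ : Matrix d d ℂ} (hρ : ρ.IsHermitian)
    (X : Matrix d d ℂ) : (ρ * (ℜ X : Matrix d d ℂ)).trace = ((ρ * X).trace.re : ℂ) := by
  rw [realPart_apply_coe, Matrix.mul_smul, trace_smul, Matrix.mul_add, trace_add,
    star_eq_conjTranspose, hρ.trace_mul_conjTranspose, Complex.star_def, Complex.add_conj,
    Complex.real_smul]
  push_cast
  ring

lemma Matrix.IsHermitian.trace_mul_imaginaryPart {ρ : Matrix d d ℂ} (hρ : ρ.IsHermitian)
    (X : Matrix d d ℂ) : (ρ * (ℑ X : Matrix d d ℂ)).trace = ((ρ * X).trace.im : ℂ) := by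
  rw [imaginaryPart_apply_coe, Matrix.mul_smul, Matrix.mul_smul, trace_smul, trace_smul,
    Matrix.mul_sub, trace_sub, star_eq_conjTranspose, hρ.trace_mul_conjTranspose,
    Complex.star_def, Complex.sub_conj, Complex.real_smul, smul_eq_mul]
  push_cast
  ring_nf
  rw [Complex.I_sq]
  ring

lemma Matrix.posSemidef_realPart_of_re_trace_mul_nonneg {W : Matrix d d ℂ}
    (h : ∀ P : Matrix d d ℂ, P.PosSemidef → 0 ≤ (P * W).trace.re) :
    (ℜ W : Matrix d d ℂ).PosSemidef := by
  refine .of_dotProduct_mulVec_nonneg (ℜ W).prop fun v => ?_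
  rw [← trace_mul_vecMulVec_star, trace_mul_comm,
    (posSemidef_vecMulVec_self_star v).isHermitian.trace_mul_realPart]
  exact Complex.zero_le_real.2 (h _ (posSemidef_vecMulVec_self_star v))

lemma Matrix.exists_forall_eq_trace_mul {R : Type*} [CommSemiring R] [DecidableEq d]
    (F : Matrix d d R →ₗ[R] R) : ∃ W : Matrix d d R, ∀ A, F A = (W * A).trace := by
  let W : Matrix d d R := of fun j i => F (single i j 1)
  let G : Matrix d d R →ₗ[R] R :=
    { toFun := fun A => (W * A).trace
      map_add' := fun A B => by rw [Matrix.mul_add, trace_add]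
      map_smul' := fun c A => by rw [Matrix.mul_smul, trace_smul]; rfl }
  suffices F = G from ⟨W, LinearMap.congr_fun this⟩
  refine ext_linearMap R fun i j => LinearMap.ext_ring ?_
  simp [G, W, trace_mul_single]

lemma Matrix.PosSemidef.exists_eq_conjTranspose_mul_self [DecidableEq d] {A : Matrix d d ℂ}
    (hA : A.PosSemidef) : ∃ B : Matrix d d ℂ, A = Bᴴ * B := by
  open scoped MatrixOrder Matrix.Norms.L2Operator in
  exact CStarAlgebra.nonneg_iff_eq_star_mul_self.1 hA.nonneg

open scoped Matrix.Norms.Elementwise in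
lemma Matrix.norm_le_sqrt_re_trace_conjTranspose_mul_self (B : Matrix d d ℂ) :
    ‖B‖ ≤ √(Bᴴ * B).trace.re := by
  have htrace : (Bᴴ * B).trace.re = ∑ j, ∑ i, ‖B i j‖ ^ 2 := by
    simp [trace, mul_apply, Complex.re_sum, ← Complex.normSq_eq_norm_sq, Complex.normSq_apply]
  refine (norm_le_iff (Real.sqrt_nonneg _)).2 fun i j => Real.le_sqrt_of_sq_le ?_
  rw [htrace]
  exact (Finset.single_le_sum (f := fun i => ‖B i j‖ ^ 2) (fun _ _ => by positivity)
    (Finset.mem_univ i)).trans (Finset.single_le_sum (f := fun j => ∑ i, ‖B i j‖ ^ 2)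
      (fun _ _ => by positivity) (Finset.mem_univ j))

end GeneralMatrix

lemma isClosed_range_of_norm_le {E Y : Type*} [SeminormedAddCommGroup E] [ProperSpace E]
    [TopologicalSpace Y] [T2Space Y] [CompactlyCoherentSpace Y] {f : E → Y} {g : Y → ℝ}
    (hf : Continuous f) (hg : Continuous g) (hfg : ∀ x, ‖x‖ ≤ g (f x)) :
    IsClosed (Set.range f) := by
  refine (isProperMap_iff_isCompact_preimage.2 ⟨hf, fun K hK => ?_⟩).isClosed_range
  obtain ⟨R, hR⟩ := hK.bddAbove_image hg.continuousOn
  exact Metric.isCompact_of_isClosed_isBounded (hK.isClosed.preimage hf)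
    (isBounded_iff_forall_norm_le.2 ⟨R, fun x hx => (hfg x).trans (hR ⟨f x, hx, rfl⟩)⟩)

section PartialTranspose

variable {m n : ℕ}

lemma partialTranspose_partialTranspose (ρ : Matrix (Fin m × Fin n) (Fin m × Fin n) ℂ) :
    partialTranspose (partialTranspose ρ) = ρ :=
  rfl

lemma partialTranspose_zero :
    partialTranspose (0 : Matrix (Fin m × Fin n) (Fin m × Fin n) ℂ) = 0 :=
  rfl

lemma partialTranspose_add (ρ σ : Matrix (Fin m × Fin n) (Fin m × Fin n) ℂ) :
    partialTranspose (ρ + σ) = partialTranspose ρ + partialTranspose σ :=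
  rfl

lemma partialTranspose_smul {R : Type*} [SMul R ℂ] (c : R)
    (ρ : Matrix (Fin m × Fin n) (Fin m × Fin n) ℂ) :
    partialTranspose (c • ρ) = c • partialTranspose ρ :=
  rfl

lemma partialTranspose_realPart (ρ : Matrix (Fin m × Fin n) (Fin m × Fin n) ℂ) :
    partialTranspose (ℜ ρ : Matrix (Fin m × Fin n) (Fin m × Fin n) ℂ) = ℜ (partialTranspose ρ) :=
  rfl

lemma trace_partialTranspose (ρ : Matrix (Fin m × Fin n) (Fin m × Fin n) ℂ) :
    (partialTranspose ρ).trace = ρ.trace :=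
  rfl

lemma trace_mul_partialTranspose (ρ σ : Matrix (Fin m × Fin n) (Fin m × Fin n) ℂ) :
    (ρ * partialTranspose σ).trace = (partialTranspose ρ * σ).trace := by
  simp only [trace, diag, mul_apply, partialTranspose, of_apply, Fintype.sum_prod_type]
  refine Finset.sum_congr rfl fun i _ => ?_
  rw [Finset.sum_comm]
  conv_rhs => rw [Finset.sum_comm]
  exact Finset.sum_congr rfl fun j _ => Finset.sum_comm

@[fun_prop]
lemma continuous_partialTranspose :
    Continuous (partialTranspose : Matrix (Fin m × Fin n) (Fin m × Fin n) ℂ → _) :=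
  continuous_matrix fun _ _ => continuous_id.matrix_elem _ _

end PartialTranspose

section Choi

variable {m n : ℕ}

lemma blockApply_conjTranspose_mul_mul (k : ℕ) (W : Matrix (Fin m) (Fin n) ℂ)
    (X : Matrix (Fin k × Fin m) (Fin k × Fin m) ℂ) :
    blockApply k (fun Y => Wᴴ * Y * W) X =
      ((1 : Matrix (Fin k) (Fin k) ℂ) ⊗ₖ W)ᴴ * X * ((1 : Matrix (Fin k) (Fin k) ℂ) ⊗ₖ W) := by
  ext ⟨p, a⟩ ⟨q, b⟩
  simp [blockApply, mul_apply, one_apply, Fintype.sum_prod_type, apply_ite (starRingEnd ℂ),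
    ite_mul]

lemma isCompletelyPositive_conjTranspose_mul_mul (W : Matrix (Fin m) (Fin n) ℂ) :
    IsCompletelyPositive fun X : Matrix (Fin m) (Fin m) ℂ => Wᴴ * X * W := fun k X hX => by
  rw [blockApply_conjTranspose_mul_mul]
  exact hX.conjTranspose_mul_mul_same _

lemma IsCompletelyPositive.sum {ι : Type*} (s : Finset ι)
    {Φ : ι → Matrix (Fin m) (Fin m) ℂ → Matrix (Fin n) (Fin n) ℂ}
    (hΦ : ∀ t ∈ s, IsCompletelyPositive (Φ t)) :
    IsCompletelyPositive fun X => ∑ t ∈ s, Φ t X := fun k X hX => by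
  have : blockApply k (fun X => ∑ t ∈ s, Φ t X) X = ∑ t ∈ s, blockApply k (Φ t) X := by
    ext p q
    simp [blockApply, Matrix.sum_apply]
  rw [this]
  exact posSemidef_sum s fun t ht => hΦ t ht k X hX

/-- `C_Φ = Φ_m(ω ω*)` for the unnormalised maximally entangled vector `ω = ∑ i, e_i ⊗ e_i`. -/
lemma IsCompletelyPositive.posSemidef_choiMatrix
    {Φ : Matrix (Fin m) (Fin m) ℂ → Matrix (Fin n) (Fin n) ℂ} (hΦ : IsCompletelyPositive Φ) :
    (choiMatrix Φ).PosSemidef := by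
  let ω : Fin m × Fin m → ℂ := fun p => if p.1 = p.2 then 1 else 0
  convert hΦ m _ (posSemidef_vecMulVec_self_star ω) using 1
  ext ⟨i, a⟩ ⟨j, b⟩
  simp only [choiMatrix, blockApply, of_apply]
  congr 1
  ext k l
  by_cases i = k <;> by_cases j = l <;> simp_all [ω, vecMulVec_apply]

def mapOfChoi (C : Matrix (Fin m × Fin n) (Fin m × Fin n) ℂ) (X : Matrix (Fin m) (Fin m) ℂ) :
    Matrix (Fin n) (Fin n) ℂ :=
  of fun a b => ∑ i, ∑ j, X i j * C (i, a) (j, b)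

lemma isLinearMap_mapOfChoi (C : Matrix (Fin m × Fin n) (Fin m × Fin n) ℂ) :
    IsLinearMap ℂ (mapOfChoi C) where
  map_add X Y := by ext a b; simp [mapOfChoi, add_mul, Finset.sum_add_distrib]
  map_smul c X := by ext a b; simp [mapOfChoi, Finset.mul_sum, mul_assoc]

lemma mapOfChoi_choiMatrix {Φ : Matrix (Fin m) (Fin m) ℂ → Matrix (Fin n) (Fin n) ℂ}
    (hΦ : IsLinearMap ℂ Φ) : mapOfChoi (choiMatrix Φ) = Φ := by
  let L := IsLinearMap.mk' Φ hΦ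
  let M := IsLinearMap.mk' _ (isLinearMap_mapOfChoi (choiMatrix Φ))
  suffices M = L from funext (LinearMap.congr_fun this)
  refine ext_linearMap ℂ fun i j => LinearMap.ext_ring ?_
  show mapOfChoi (choiMatrix Φ) (single i j 1) = Φ (single i j 1)
  ext a b
  simp [mapOfChoi, choiMatrix, single_apply, ite_and]

lemma mapOfChoi_add (C D : Matrix (Fin m × Fin n) (Fin m × Fin n) ℂ)
    (X : Matrix (Fin m) (Fin m) ℂ) : mapOfChoi (C + D) X = mapOfChoi C X + mapOfChoi D X := by
  ext a b
  simp [mapOfChoi, mul_add, Finset.sum_add_distrib]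

lemma mapOfChoi_sum {ι : Type*} (s : Finset ι)
    (C : ι → Matrix (Fin m × Fin n) (Fin m × Fin n) ℂ) (X : Matrix (Fin m) (Fin m) ℂ) :
    mapOfChoi (∑ t ∈ s, C t) X = ∑ t ∈ s, mapOfChoi (C t) X := by
  ext a b
  simp only [mapOfChoi, of_apply, Matrix.sum_apply, Finset.mul_sum]
  exact (Finset.sum_comm.trans (Finset.sum_congr rfl fun _ _ => Finset.sum_comm)).symm

lemma transpose_mapOfChoi (C : Matrix (Fin m × Fin n) (Fin m × Fin n) ℂ)
    (X : Matrix (Fin m) (Fin m) ℂ) : (mapOfChoi C X)ᵀ = mapOfChoi (partialTranspose C) X :=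
  rfl

lemma mapOfChoi_vecMulVec_star (v : Fin m × Fin n → ℂ) (X : Matrix (Fin m) (Fin m) ℂ) :
    mapOfChoi (vecMulVec v (star v)) X =
      ((of fun i a => star (v (i, a)))ᴴ * X * of fun i a => star (v (i, a)) :
        Matrix (Fin n) (Fin n) ℂ) := by
  ext a b
  simp [mapOfChoi, mul_apply, vecMulVec_apply, Finset.sum_mul]
  rw [Finset.sum_comm]
  exact Finset.sum_congr rfl fun _ _ => Finset.sum_congr rfl fun _ _ => by ring

lemma isCompletelyPositive_mapOfChoi {C : Matrix (Fin m × Fin n) (Fin m × Fin n) ℂ}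
    (hC : C.PosSemidef) : IsCompletelyPositive (mapOfChoi C) := by
  obtain ⟨r, v, rfl⟩ := posSemidef_iff_eq_sum_vecMulVec.1 hC
  have hKraus : mapOfChoi (∑ t, vecMulVec (v t) (star (v t))) = fun X => ∑ t,
      ((of fun i a => star (v t (i, a)))ᴴ * X * of fun i a => star (v t (i, a)) :
        Matrix (Fin n) (Fin n) ℂ) :=
    funext fun X => by simp only [mapOfChoi_sum, mapOfChoi_vecMulVec_star]
  rw [hKraus]
  exact .sum _ fun t _ => isCompletelyPositive_conjTranspose_mul_mul _

end Choi

section Cone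

variable {m n : ℕ}

lemma setOf_eq_add_partialTranspose_eq_range :
    {A : Matrix (Fin m × Fin n) (Fin m × Fin n) ℂ |
      ∃ P Q, P.PosSemidef ∧ Q.PosSemidef ∧ A = P + partialTranspose Q} =
      Set.range fun BD : Matrix (Fin m × Fin n) (Fin m × Fin n) ℂ ×
        Matrix (Fin m × Fin n) (Fin m × Fin n) ℂ =>
          BD.1ᴴ * BD.1 + partialTranspose (BD.2ᴴ * BD.2) := by
  ext A
  constructor
  · rintro ⟨P, Q, hP, hQ, rfl⟩
    obtain ⟨B, rfl⟩ := hP.exists_eq_conjTranspose_mul_self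
    obtain ⟨D, rfl⟩ := hQ.exists_eq_conjTranspose_mul_self
    exact ⟨(B, D), rfl⟩
  · rintro ⟨⟨B, D⟩, rfl⟩
    exact ⟨_, _, posSemidef_conjTranspose_mul_self B, posSemidef_conjTranspose_mul_self D, rfl⟩

open scoped Matrix.Norms.Elementwise in
lemma isClosed_setOf_eq_add_partialTranspose :
    IsClosed {A : Matrix (Fin m × Fin n) (Fin m × Fin n) ℂ |
      ∃ P Q, P.PosSemidef ∧ Q.PosSemidef ∧ A = P + partialTranspose Q} := by
  have : CompactlyCoherentSpace (Matrix (Fin m × Fin n) (Fin m × Fin n) ℂ) :=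
    inferInstanceAs (CompactlyCoherentSpace (Fin m × Fin n → Fin m × Fin n → ℂ))
  rw [setOf_eq_add_partialTranspose_eq_range]
  refine isClosed_range_of_norm_le (g := fun A => √A.trace.re) (by fun_prop) (by fun_prop) ?_
  rintro ⟨B, D⟩
  have hB := Complex.le_def.1 (posSemidef_conjTranspose_mul_self B).trace_nonneg
  have hD := Complex.le_def.1 (posSemidef_conjTranspose_mul_self D).trace_nonneg
  simp only [Complex.zero_re] at hB hD
  rw [Prod.norm_def, trace_add, trace_partialTranspose, Complex.add_re]
  exact max_le
    (B.norm_le_sqrt_re_trace_conjTranspose_mul_self.trans (Real.sqrt_le_sqrt (by linarith)))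
    (D.norm_le_sqrt_re_trace_conjTranspose_mul_self.trans (Real.sqrt_le_sqrt (by linarith)))

def decomposableCone (m n : ℕ) : ProperCone ℝ (Matrix (Fin m × Fin n) (Fin m × Fin n) ℂ) where
  carrier := {A | ∃ P Q, P.PosSemidef ∧ Q.PosSemidef ∧ A = P + partialTranspose Q}
  add_mem' := by
    rintro _ _ ⟨P, Q, hP, hQ, rfl⟩ ⟨P', Q', hP', hQ', rfl⟩
    exact ⟨P + P', Q + Q', hP.add hP', hQ.add hQ', by rw [partialTranspose_add]; abel⟩
  zero_mem' := ⟨0, 0, .zero, .zero, by rw [partialTranspose_zero, add_zero]⟩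
  smul_mem' := by
    rintro c _ ⟨P, Q, hP, hQ, rfl⟩
    exact ⟨c • P, c • Q, hP.smul c.2, hQ.smul c.2, by rw [smul_add, partialTranspose_smul]⟩
  isClosed' := isClosed_setOf_eq_add_partialTranspose

lemma eq_zero_of_mem_decomposableCone_of_neg_mem {A : Matrix (Fin m × Fin n) (Fin m × Fin n) ℂ}
    (hA : A ∈ decomposableCone m n) (hA' : -A ∈ decomposableCone m n) : A = 0 := by
  obtain ⟨P, Q, hP, hQ, rfl⟩ := hA
  obtain ⟨P', Q', hP', hQ', hPQ'⟩ := hA'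
  have htrace : P.trace + Q.trace + (P'.trace + Q'.trace) = 0 := by
    rw [← trace_partialTranspose Q, ← trace_partialTranspose Q', ← trace_add, ← trace_add,
      ← trace_add, ← hPQ', add_neg_cancel, trace_zero]
  obtain ⟨hPQ, -⟩ := (add_eq_zero_iff_of_nonneg (add_nonneg hP.trace_nonneg hQ.trace_nonneg)
    (add_nonneg hP'.trace_nonneg hQ'.trace_nonneg)).1 htrace
  obtain ⟨hP0, hQ0⟩ := (add_eq_zero_iff_of_nonneg hP.trace_nonneg hQ.trace_nonneg).1 hPQ
  rw [hP.trace_eq_zero_iff.1 hP0, hQ.trace_eq_zero_iff.1 hQ0, partialTranspose_zero, add_zero]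

/-- If `X ∉ K`, separate it by `f = Re Tr(W ·) ≥ 0` on `K`: then `ℜ W` is PPT but pairs negatively
with `X`. -/
lemma mem_decomposableCone_of_re_trace_mul_nonneg
    {X : Matrix (Fin m × Fin n) (Fin m × Fin n) ℂ} (hX : X.IsHermitian)
    (h : ∀ ρ : Matrix (Fin m × Fin n) (Fin m × Fin n) ℂ, ρ.PosSemidef →
      (partialTranspose ρ).PosSemidef → 0 ≤ (ρ * X).trace.re) :
    X ∈ decomposableCone m n := by
  by_contra hXK
  have : LocallyConvexSpace ℝ (Matrix (Fin m × Fin n) (Fin m × Fin n) ℂ) :=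
    inferInstanceAs (LocallyConvexSpace ℝ (Fin m × Fin n → Fin m × Fin n → ℂ))
  obtain ⟨f, hfK, hfX⟩ := ProperCone.hyperplane_separation_point _ hXK
  obtain ⟨W, hW⟩ := exists_forall_eq_trace_mul (StrongDual.extendRCLike (𝕜 := ℂ) f).toLinearMap
  have hf (A) : f A = (W * A).trace.re := by
    rw [← hW]
    exact (StrongDual.re_extendRCLike_apply (𝕜 := ℂ) f A).symm
  have hρ : (ℜ W : Matrix (Fin m × Fin n) (Fin m × Fin n) ℂ).PosSemidef :=
    posSemidef_realPart_of_re_trace_mul_nonneg fun P hP => by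
      rw [trace_mul_comm, ← hf]
      exact hfK _ ⟨P, 0, hP, .zero, by rw [partialTranspose_zero, add_zero]⟩
  have hρT : (partialTranspose (ℜ W : Matrix (Fin m × Fin n) (Fin m × Fin n) ℂ)).PosSemidef := by
    rw [partialTranspose_realPart]
    refine posSemidef_realPart_of_re_trace_mul_nonneg fun Q hQ => ?_
    rw [trace_mul_partialTranspose, trace_mul_comm, ← hf]
    exact hfK _ ⟨0, Q, .zero, hQ, (zero_add _).symm⟩
  have hXρ := h _ hρ hρT
  rw [trace_mul_comm, hX.trace_mul_realPart, Complex.ofReal_re, trace_mul_comm, ← hf] at hXρ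
  exact lt_irrefl 0 (hXρ.trans_lt hfX)

end Cone

lemma isHermitian_of_forall_trace_mul_nonneg {m n : ℕ}
    {C : Matrix (Fin m × Fin n) (Fin m × Fin n) ℂ}
    (h : ∀ ρ : Matrix (Fin m × Fin n) (Fin m × Fin n) ℂ, ρ.PosSemidef →
      (partialTranspose ρ).PosSemidef → 0 ≤ (ρ * C).trace) :
    C.IsHermitian := by
  have hIm (ρ : Matrix (Fin m × Fin n) (Fin m × Fin n) ℂ) (hρ : ρ.PosSemidef)
      (hρT : (partialTranspose ρ).PosSemidef) : (ρ * (ℑ C : Matrix _ _ ℂ)).trace.re = 0 := by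
    rw [hρ.isHermitian.trace_mul_imaginaryPart, Complex.ofReal_re]
    exact (Complex.le_def.1 (h ρ hρ hρT)).2.symm
  have hmem : (ℑ C : Matrix _ _ ℂ) ∈ decomposableCone m n :=
    mem_decomposableCone_of_re_trace_mul_nonneg (ℑ C).prop fun ρ hρ hρT => (hIm ρ hρ hρT).ge
  have hmem' : -(ℑ C : Matrix _ _ ℂ) ∈ decomposableCone m n :=
    mem_decomposableCone_of_re_trace_mul_nonneg (ℑ C).prop.neg fun ρ hρ hρT => by
      rw [Matrix.mul_neg, trace_neg, Complex.neg_re, hIm ρ hρ hρT, neg_zero]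
  exact imaginaryPart_eq_zero_iff.1
    (Subtype.ext (eq_zero_of_mem_decomposableCone_of_neg_mem hmem hmem'))

/-- A linear map `Φ : M_m → M_n` is decomposable iff `Tr(ρ C_Φ) ≥ 0`
for every PPT matrix `ρ ∈ M_m ⊗ M_n`. -/
theorem isDecomposable_iff_trace_nonneg_on_PPT (m n : ℕ)
    (Φ : Matrix (Fin m) (Fin m) ℂ → Matrix (Fin n) (Fin n) ℂ) (hlin : IsLinearMap ℂ Φ) :
    IsDecomposable Φ ↔ ∀ ρ : Matrix (Fin m × Fin n) (Fin m × Fin n) ℂ,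
      ρ.PosSemidef → (partialTranspose ρ).PosSemidef → 0 ≤ (ρ * choiMatrix Φ).trace := by
  constructor
  · rintro ⟨Φ₁, Φ₂, -, -, hΦ₁, hΦ₂, hΦ⟩ ρ hρ hρT
    have hchoi : choiMatrix Φ =
        choiMatrix Φ₁ + partialTranspose (choiMatrix fun X => (Φ₂ X)ᵀ) := by
      rw [show Φ = fun X => Φ₁ X + Φ₂ X from funext hΦ]
      rfl
    rw [hchoi, Matrix.mul_add, trace_add, trace_mul_partialTranspose]
    exact add_nonneg (hρ.trace_mul_nonneg hΦ₁.posSemidef_choiMatrix)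
      (hρT.trace_mul_nonneg hΦ₂.posSemidef_choiMatrix)
  · intro h
    obtain ⟨P, Q, hP, hQ, hPQ⟩ := mem_decomposableCone_of_re_trace_mul_nonneg
      (isHermitian_of_forall_trace_mul_nonneg h) fun ρ hρ hρT => (Complex.le_def.1 (h ρ hρ hρT)).1
    refine ⟨mapOfChoi P, mapOfChoi (partialTranspose Q), isLinearMap_mapOfChoi P,
      isLinearMap_mapOfChoi _, isCompletelyPositive_mapOfChoi hP, ?_, fun X => ?_⟩
    · simpa only [transpose_mapOfChoi, partialTranspose_partialTranspose]
        using isCompletelyPositive_mapOfChoi hQ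
    · rw [← mapOfChoi_add, ← hPQ, mapOfChoi_choiMatrix hlin]
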